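/- For r ≥ 9, n ≥ 5 with n ≥ r−1 and S := {{1,2},{1,3},…,{1,n},{2,3},{4,5}}, the colorability defect lower bound fails for the Kneser hypergraph without multiplicities: cd^r_{r-2}(S) = 3r−10 > 2(r−1) = (r−1)·χ(kg^r_{r-2}(S)). -/

import Mathlib

/-- The family `S = {{1,2},{1,3},…,{1,n},{2,3},{4,5}}` of 2-subsets of `[n]`. -/
def Sfam (n : ℕ) : Finset (Finset ℕ) :=
  ((Finset.Icc 2 n).image fun j => ({1, j} : Finset ℕ)) ∪
    {({2, 3} : Finset ℕ), ({4, 5} : Finset ℕ)}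

/-- An edge of the multiplicity-free Kneser hypergraph `kg^r_s(S)`. -/
def kgEdge (r s : ℕ) (S : Finset (Finset ℕ)) (e : Finset (Finset ℕ)) : Prop :=
  e.card = r ∧ e ⊆ S ∧ ∀ i : ℕ, (e.filter fun T => i ∈ T).card ≤ s

/-- The chromatic number of `kg^r_s(S)`. -/
noncomputable def chromkg (r s : ℕ) (S : Finset (Finset ℕ)) : ℕ :=
  sInf {m | ∃ c : Finset ℕ → Fin m,
    ∀ e, kgEdge r s S e → ∃ A ∈ e, ∃ B ∈ e, c A ≠ c B}

/-- The `(s,…,s)`-disjoint `r`-colorability defect over the ground set `[n]`. -/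
noncomputable def cdN (n r s : ℕ) (S : Finset (Finset ℕ)) : ℕ :=
  n * s - sSup {m | ∃ R : Multiset (Finset ℕ),
    Multiset.card R = r ∧
    (∀ A ∈ R, A ⊆ Finset.Icc 1 n) ∧
    (∀ i : ℕ, R.countP (fun A => i ∈ A) ≤ s) ∧
    (∀ A ∈ R, ∀ T ∈ S, ¬ T ⊆ A) ∧
    m = (R.map Finset.card).sum}

/-!
Every member of `S` other than `{2,3}` and `{4,5}` contains `1`, and an edge of
`kg^r_{r-2}(S)` has at most `r - 2` members through `1`; so every edge contains both `{2,3}`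
and `{4,5}`, and colouring `{2,3}` apart from all other sets is proper. Since `S` restricted
to `[r-1]` is an edge, `χ = 2`.

For the defect, the total size of `r` sets equals the sum over `i ∈ [n]` of the number of sets
containing `i`. All pairs inside `{1,2,3}` and inside `{1,4,5}` belong to `S`, so an `S`-free
set meets each of these triples at most once; hence the degrees of `1,…,5` add up to at most
`2r`, while every other degree is at most `r - 2`. This bound `(r-2)(n-3) + 4` is attained by
`r - 2` copies of `[n] ∖ {1,3,5}` and two copies of `{3,5}`.
-/

open Finset

theorem Multiset.countP_replicate {α : Type*} (p : α → Prop) [DecidablePred p] (k : ℕ) (a : α) :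
    (replicate k a).countP p = if p a then k else 0 := by
  rw [← nsmul_singleton, countP_nsmul]
  by_cases h : p a <;> simp [h, countP_eq_card_filter, filter_singleton]

section DoubleCounting

variable {α : Type*} [DecidableEq α]

theorem Multiset.sum_map_card_inter_eq_sum_countP (R : Multiset (Finset α)) (I : Finset α) :
    (R.map fun A => #(A ∩ I)).sum = ∑ i ∈ I, R.countP (i ∈ ·) := by
  induction R using Multiset.induction with
  | empty => simp
  | cons A R ih =>
    simp only [Multiset.map_cons, Multiset.sum_cons, Multiset.countP_cons, sum_add_distrib, ih,
      sum_boole, Nat.cast_id, filter_mem_eq_inter, Finset.inter_comm I A]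
    exact add_comm _ _

theorem Multiset.sum_countP_le_card {R : Multiset (Finset α)} {I : Finset α}
    (hR : ∀ A ∈ R, #(A ∩ I) ≤ 1) : ∑ i ∈ I, R.countP (i ∈ ·) ≤ Multiset.card R := by
  rw [← Multiset.sum_map_card_inter_eq_sum_countP]
  simpa using Multiset.sum_map_le_sum_map _ (fun _ => 1) hR

theorem card_inter_le_one_of_powersetCard_two_subset {S : Finset (Finset α)} {A I : Finset α}
    (hI : I.powersetCard 2 ⊆ S) (hA : ∀ T ∈ S, ¬ T ⊆ A) : #(A ∩ I) ≤ 1 := by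
  by_contra! h
  obtain ⟨T, hT, hcard⟩ := exists_subset_card_eq h
  exact hA T (hI (mem_powersetCard.2 ⟨hT.trans inter_subset_right, hcard⟩))
    (hT.trans inter_subset_left)

end DoubleCounting

theorem chromkg_eq_two {r s : ℕ} {S e₀ : Finset (Finset ℕ)} (he₀ : kgEdge r s S e₀)
    {A B : Finset ℕ} (hAB : A ≠ B) (hmem : ∀ e, kgEdge r s S e → A ∈ e ∧ B ∈ e) :
    chromkg r s S = 2 := by
  have h2 : 2 ∈ {m | ∃ c : Finset ℕ → Fin m,
      ∀ e, kgEdge r s S e → ∃ A ∈ e, ∃ B ∈ e, c A ≠ c B} := by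
    refine ⟨fun T => if T = A then 0 else 1, fun e he => ⟨A, (hmem e he).1, B, (hmem e he).2, ?_⟩⟩
    simp [hAB.symm]
  refine le_antisymm (Nat.sInf_le h2) (le_csInf ⟨2, h2⟩ fun m ⟨c, hc⟩ => ?_)
  by_contra! hm
  interval_cases m
  · exact (c ∅).elim0
  · obtain ⟨A, -, B, -, hcAB⟩ := hc e₀ he₀
    exact hcAB (Subsingleton.elim _ _)

def cdSizes (n r s : ℕ) (S : Finset (Finset ℕ)) : Set ℕ :=
  {m | ∃ R : Multiset (Finset ℕ),
    Multiset.card R = r ∧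
    (∀ A ∈ R, A ⊆ Finset.Icc 1 n) ∧
    (∀ i : ℕ, R.countP (fun A => i ∈ A) ≤ s) ∧
    (∀ A ∈ R, ∀ T ∈ S, ¬ T ⊆ A) ∧
    m = (R.map Finset.card).sum}

theorem cdN_eq (n r s : ℕ) (S : Finset (Finset ℕ)) :
    cdN n r s S = n * s - sSup (cdSizes n r s S) :=
  rfl

section Sfam

variable {n r : ℕ}

theorem mem_Sfam {T : Finset ℕ} :
    T ∈ Sfam n ↔ (∃ j ∈ Icc 2 n, {1, j} = T) ∨ T = {2, 3} ∨ T = {4, 5} := by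
  simp only [Sfam, mem_union, mem_image, mem_insert, mem_singleton]

theorem pair_one_mem_Sfam {j : ℕ} (h2j : 2 ≤ j) (hjn : j ≤ n) : {1, j} ∈ Sfam n :=
  mem_Sfam.2 (.inl ⟨j, mem_Icc.2 ⟨h2j, hjn⟩, rfl⟩)

theorem Sfam_mono : Monotone Sfam := fun _ _ h =>
  union_subset_union (image_subset_image (Icc_subset_Icc_right h)) le_rfl

theorem filter_one_mem_Sfam (n : ℕ) :
    (Sfam n).filter (1 ∈ ·) = (Icc 2 n).image fun j => ({1, j} : Finset ℕ) := by
  ext T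
  simp only [mem_filter, mem_Sfam, mem_image]
  constructor
  · rintro ⟨h | rfl | rfl, h1⟩ <;> simp_all
  · rintro ⟨j, hj, rfl⟩
    exact ⟨.inl ⟨j, hj, rfl⟩, by simp⟩

theorem filter_one_not_mem_Sfam (n : ℕ) :
    (Sfam n).filter (1 ∉ ·) = {{2, 3}, {4, 5}} := by
  ext T
  simp only [mem_filter, mem_Sfam, mem_insert, mem_singleton]
  constructor
  · rintro ⟨⟨j, -, rfl⟩ | h, h1⟩
    · simp at h1
    · exact h
  · rintro (rfl | rfl) <;> simp

theorem card_filter_one_mem_Sfam (n : ℕ) : #((Sfam n).filter (1 ∈ ·)) = n - 1 := by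
  rw [filter_one_mem_Sfam, card_image_of_injOn, Nat.card_Icc]
  · omega
  · intro a ha b hb hab
    have : a ∈ ({1, b} : Finset ℕ) := by simp only at hab; simp [← hab]
    simp only [coe_Icc, Set.mem_Icc] at ha
    simp only [mem_insert, mem_singleton] at this
    omega

theorem card_filter_mem_Sfam_le_three (n : ℕ) {i : ℕ} (hi : i ≠ 1) :
    #((Sfam n).filter (i ∈ ·)) ≤ 3 := by
  refine (card_le_card (t := {{1, i}, {2, 3}, {4, 5}}) ?_).trans card_le_three
  intro T
  simp only [mem_filter, mem_Sfam, mem_insert, mem_singleton]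
  rintro ⟨⟨j, -, rfl⟩ | h, hiT⟩
  · simp only [mem_insert, mem_singleton, hi, false_or] at hiT
    exact .inl (hiT ▸ rfl)
  · exact .inr h

theorem kgEdge_Sfam (hr : 5 ≤ r) (hrn : r - 1 ≤ n) :
    kgEdge r (r - 2) (Sfam n) (Sfam (r - 1)) := by
  refine ⟨?_, Sfam_mono hrn, fun i => ?_⟩
  · rw [← card_filter_add_card_filter_not (1 ∈ ·), card_filter_one_mem_Sfam,
      filter_one_not_mem_Sfam, card_pair (by decide)]
    omega
  · rcases eq_or_ne i 1 with rfl | hi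
    · rw [card_filter_one_mem_Sfam]; omega
    · exact (card_filter_mem_Sfam_le_three _ hi).trans (by omega)

theorem pairs_mem_of_kgEdge_Sfam (hr : 2 ≤ r) {e : Finset (Finset ℕ)}
    (he : kgEdge r (r - 2) (Sfam n) e) : {2, 3} ∈ e ∧ {4, 5} ∈ e := by
  obtain ⟨hcard, heS, hdeg⟩ := he
  have hsub : e.filter (1 ∉ ·) ⊆ {{2, 3}, {4, 5}} :=
    filter_one_not_mem_Sfam n ▸ filter_subset_filter _ heS
  have hfilter : e.filter (1 ∉ ·) = {{2, 3}, {4, 5}} := by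
    refine eq_of_subset_of_card_le hsub ?_
    have := card_filter_add_card_filter_not (s := e) (1 ∈ ·)
    have := hdeg 1
    rw [card_pair (by decide)]
    omega
  have h23 : {2, 3} ∈ e.filter (1 ∉ ·) := hfilter ▸ mem_insert_self _ _
  have h45 : {4, 5} ∈ e.filter (1 ∉ ·) := hfilter ▸ mem_insert_of_mem (mem_singleton_self _)
  exact ⟨(mem_filter.1 h23).1, (mem_filter.1 h45).1⟩

theorem chromkg_Sfam (hr : 5 ≤ r) (hrn : r - 1 ≤ n) : chromkg r (r - 2) (Sfam n) = 2 :=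
  chromkg_eq_two (kgEdge_Sfam hr hrn) (by decide) fun _ he =>
    pairs_mem_of_kgEdge_Sfam (by omega) he

theorem card_inter_le_one_of_Sfam_free (hn : 5 ≤ n) {A : Finset ℕ}
    (hA : ∀ T ∈ Sfam n, ¬ T ⊆ A) : #(A ∩ {1, 2, 3}) ≤ 1 ∧ #(A ∩ {1, 4, 5}) ≤ 1 := by
  have h123 : ({1, 2, 3} : Finset ℕ).powersetCard 2 = {{1, 2}, {1, 3}, {2, 3}} := by decide
  have h145 : ({1, 4, 5} : Finset ℕ).powersetCard 2 = {{1, 4}, {1, 5}, {4, 5}} := by decide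
  refine ⟨card_inter_le_one_of_powersetCard_two_subset ?_ hA,
    card_inter_le_one_of_powersetCard_two_subset ?_ hA⟩
  · simp only [h123, insert_subset_iff, singleton_subset_iff]
    exact ⟨pair_one_mem_Sfam le_rfl (by omega), pair_one_mem_Sfam (by omega) (by omega),
      mem_Sfam.2 (.inr (.inl rfl))⟩
  · simp only [h145, insert_subset_iff, singleton_subset_iff]
    exact ⟨pair_one_mem_Sfam (by omega) (by omega), pair_one_mem_Sfam (by omega) (by omega),
      mem_Sfam.2 (.inr (.inr rfl))⟩

theorem le_of_mem_cdSizes_Sfam {m : ℕ} (hn : 5 ≤ n) (hr : 2 ≤ r)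
    (hm : m ∈ cdSizes n r (r - 2) (Sfam n)) : m ≤ (r - 2) * (n - 3) + 4 := by
  obtain ⟨R, hcard, hsub, hdeg, hfree, rfl⟩ := hm
  have htotal : (R.map card).sum = ∑ i ∈ Icc 1 n, R.countP (i ∈ ·) := by
    rw [← Multiset.sum_map_card_inter_eq_sum_countP]
    exact congrArg _ (Multiset.map_congr rfl fun A hA => by rw [inter_eq_left.2 (hsub A hA)])
  have h123 : ∑ i ∈ {1, 2, 3}, R.countP (i ∈ ·) ≤ r := hcard ▸ Multiset.sum_countP_le_card
    fun A hA => (card_inter_le_one_of_Sfam_free hn (hfree A hA)).1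
  have h145 : ∑ i ∈ {1, 4, 5}, R.countP (i ∈ ·) ≤ r := hcard ▸ Multiset.sum_countP_le_card
    fun A hA => (card_inter_le_one_of_Sfam_free hn (hfree A hA)).2
  have htail : ∑ i ∈ Icc 6 n, R.countP (i ∈ ·) ≤ (n - 5) * (r - 2) := by
    simpa using sum_le_card_nsmul (Icc 6 n) _ _ fun i _ => hdeg i
  have hsplit : Icc 1 n = {1, 2, 3, 4, 5} ∪ Icc 6 n := by
    ext i; simp only [mem_union, mem_insert, mem_singleton, mem_Icc]; omega
  rw [htotal, hsplit, sum_union (by simp [disjoint_left])]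
  rw [sum_insert (by decide), sum_insert (by decide)] at h123 h145
  rw [sum_insert (by decide), sum_insert (by decide), sum_insert (by decide), sum_insert (by decide)]
  simp only [sum_singleton] at h123 h145 ⊢
  have : (r - 2) * (n - 3) = (n - 5) * (r - 2) + 2 * (r - 2) := by
    rw [← add_mul, mul_comm]; congr 1; omega
  omega

theorem mem_cdSizes_Sfam (hn : 5 ≤ n) (hr : 4 ≤ r) :
    (r - 2) * (n - 3) + 4 ∈ cdSizes n r (r - 2) (Sfam n) := by
  set A := Icc 1 n \ {1, 3, 5}
  set B : Finset ℕ := {3, 5}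
  have hBsub : B ⊆ Icc 1 n := by
    intro i; simp only [B, mem_insert, mem_singleton, mem_Icc]; omega
  have hdisj : Disjoint A B := disjoint_sdiff_self_left.mono_right (by simp [B])
  refine ⟨Multiset.replicate (r - 2) A + Multiset.replicate 2 B, ?_, ?_, fun i => ?_, ?_, ?_⟩
  · simp only [Multiset.card_add, Multiset.card_replicate]; omega
  · simp only [Multiset.mem_add, Multiset.mem_replicate]
    rintro _ (⟨-, rfl⟩ | ⟨-, rfl⟩)
    exacts [sdiff_subset, hBsub]
  · rw [Multiset.countP_add, Multiset.countP_replicate, Multiset.countP_replicate]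
    split_ifs with hiA hiB
    exacts [absurd hiB (disjoint_left.1 hdisj hiA), le_rfl, by omega, by omega]
  · -- every member of `S` meets `{1,3,5}` and `{1,2,4}`
    simp only [Multiset.mem_add, Multiset.mem_replicate]
    rintro _ (⟨-, rfl⟩ | ⟨-, rfl⟩) T hT <;>
      rcases mem_Sfam.1 hT with ⟨j, -, rfl⟩ | rfl | rfl <;> simp [A, B, insert_subset_iff]
  · have hA : #A = n - 3 := by
      rw [card_sdiff_of_subset, Nat.card_Icc, card_insert_of_notMem (by decide),
        card_pair (by decide)]
      · omega
      · intro i; simp only [mem_insert, mem_singleton, mem_Icc]; omega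
    simp only [Multiset.map_add, Multiset.sum_add, Multiset.map_replicate, Multiset.sum_replicate,
      smul_eq_mul, hA]
    rfl

theorem cdN_Sfam (hn : 5 ≤ n) (hr : 4 ≤ r) : cdN n r (r - 2) (Sfam n) = 3 * r - 10 := by
  have hmax : IsGreatest (cdSizes n r (r - 2) (Sfam n)) ((r - 2) * (n - 3) + 4) :=
    ⟨mem_cdSizes_Sfam hn hr, fun _ => le_of_mem_cdSizes_Sfam hn (by omega)⟩
  rw [cdN_eq, hmax.csSup_eq]
  obtain ⟨k, rfl⟩ : ∃ k, n = k + 3 := ⟨n - 3, by omega⟩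
  obtain ⟨s, rfl⟩ : ∃ s, r = s + 2 := ⟨r - 2, by omega⟩
  simp only [Nat.add_sub_cancel]
  rw [add_mul, mul_comm]
  omega

end Sfam

theorem stmt13_general (n r : ℕ) (hr : 9 ≤ r) (hnr : r - 1 ≤ n) :
    cdN n r (r - 2) (Sfam n) = 3 * r - 10 ∧
    (r - 1) * chromkg r (r - 2) (Sfam n) = 2 * (r - 1) ∧
    2 * (r - 1) < cdN n r (r - 2) (Sfam n) := by
  have hcd : cdN n r (r - 2) (Sfam n) = 3 * r - 10 := cdN_Sfam (by omega) (by omega)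
  exact ⟨hcd, by rw [chromkg_Sfam (by omega) hnr, mul_comm], by omega⟩

/-- For `r ≥ 9`, `n ≥ 5`, `n ≥ r-1` and `S = {{1,2},…,{1,n},{2,3},{4,5}}`,
the colorability defect lower bound fails for the Kneser hypergraph without
multiplicities: `cd^r_{r-2}(S) = 3r - 10 > 2(r-1) = (r-1)·χ(kg^r_{r-2}(S))`. -/
theorem stmt13 (n r : ℕ) (hn : 5 ≤ n) (hr : 9 ≤ r) (hnr : r - 1 ≤ n) :
    cdN n r (r - 2) (Sfam n) = 3 * r - 10 ∧
    (r - 1) * chromkg r (r - 2) (Sfam n) = 2 * (r - 1) ∧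
    2 * (r - 1) < cdN n r (r - 2) (Sfam n) :=
  stmt13_general n r hr hnr
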